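/- For any multiindex ν and α, m > 0, the squared L² norm of the monomial z^ν with respect to the measure e^{-α|z|^{2m}}dz on ℂⁿ equals (πⁿ ν!)/(m Γ(n+|ν|)) · Γ((n+|ν|)/m) / α^{(n+|ν|)/m}. -/

import Mathlib

open MeasureTheory

noncomputable def eNorm {n : ℕ} (z : Fin n → ℂ) : ℝ :=
  Real.sqrt (∑ j, ‖z j‖ ^ 2)

/-!
Let `G ≥ 0` be homogeneous of degree `k` and `Q ≥ 0` homogeneous of degree `1` on a real vector
space of dimension `d` with Haar measure. Writing `exp (-α Q^p) = ∫_Q^∞ α p r^(p-1) e^(-α r^p) dr`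
and swapping the integrals turns `∫ G · exp (-α Q^p)` into a radial integral against
`r ↦ ∫_{Q < r} G = r^(d+k) ∫_{Q < 1} G`, which is a Gamma integral:
`∫ G · exp (-α Q^p) = Γ((d+k)/p + 1) α^(-(d+k)/p) ∫_{Q < 1} G`.
For `G = |z^ν|²` and `Q = |z|` on `ℂⁿ` the unknown constant `∫_{|z| < 1} |z^ν|²` is read off from
the Gaussian case `α = m = 1`, where the integral factors into the moments
`∫_ℂ |w|^(2k) e^(-|w|²) = π k!`.
-/

open Set Real Filter Topology Module

lemma lintegral_mul_setLIntegral_Ioi_swap {X : Type*} [MeasurableSpace X] (μ : Measure X)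
    [SFinite μ] {G : X → ENNReal} {Q : X → ℝ} {φ : ℝ → ENNReal}
    (hG : Measurable G) (hQ : Measurable Q) (hφ : Measurable φ) :
    ∫⁻ x, G x * (∫⁻ r in Ioi (Q x), φ r) ∂μ = ∫⁻ r, φ r * ∫⁻ x in {x | Q x < r}, G x ∂μ := by
  set F : X → ℝ → ENNReal := fun x r =>
    {p : X × ℝ | Q p.1 < p.2}.indicator (fun p => G p.1 * φ p.2) (x, r)
  have hF : Measurable (Function.uncurry F) :=
    ((hG.comp measurable_fst).mul (hφ.comp measurable_snd)).indicator
      (measurableSet_lt (hQ.comp measurable_fst) measurable_snd)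
  have hsub (r : ℝ) : MeasurableSet {x | Q x < r} := measurableSet_lt hQ measurable_const
  calc ∫⁻ x, G x * (∫⁻ r in Ioi (Q x), φ r) ∂μ = ∫⁻ x, (∫⁻ r, F x r) ∂μ := by
        refine lintegral_congr fun x => ?_
        rw [← lintegral_indicator measurableSet_Ioi,
          ← lintegral_const_mul _ (hφ.indicator measurableSet_Ioi)]
        congr 1 with r
        by_cases h : Q x < r <;> simp [F, h]
    _ = ∫⁻ r, ∫⁻ x, F x r ∂μ := lintegral_lintegral_swap hF.aemeasurable
    _ = _ := by
        refine lintegral_congr fun r => ?_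
        rw [← lintegral_indicator (hsub r), ← lintegral_const_mul _ (hG.indicator (hsub r))]
        congr 1 with x
        by_cases h : Q x < r <;> simp [F, h, mul_comm]

lemma setLIntegral_Ioi_deriv_exp_neg_mul_rpow {α p q : ℝ} (hα : 0 < α) (hp : 0 < p)
    (hq : 0 ≤ q) :
    ∫⁻ r in Ioi q, ENNReal.ofReal (α * p * r ^ (p - 1) * exp (-α * r ^ p)) =
      ENNReal.ofReal (exp (-α * q ^ p)) := by
  set g : ℝ → ℝ := fun r => -exp (-α * r ^ p)
  have hcont : ContinuousWithinAt g (Ici q) q := by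
    have : Continuous g := by fun_prop (disch := exact hp.le)
    exact this.continuousWithinAt
  have hderiv : ∀ r ∈ Ioi q, HasDerivAt g (α * p * r ^ (p - 1) * exp (-α * r ^ p)) r := by
    intro r hr
    have h := (((hasDerivAt_rpow_const (p := p) (Or.inl (hq.trans_lt hr).ne')).const_mul
      (-α)).exp).neg
    exact h.congr_deriv (by ring)
  have hnonneg : ∀ r ∈ Ioi q, 0 ≤ α * p * r ^ (p - 1) * exp (-α * r ^ p) := fun r hr => by
    have := hq.trans_lt hr
    positivity
  have hlim : Tendsto g atTop (𝓝 0) := by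
    simpa [g] using (tendsto_exp_atBot.comp
      ((tendsto_rpow_atTop hp).const_mul_atTop_of_neg (neg_neg_of_pos hα))).neg
  rw [← ofReal_integral_eq_lintegral_ofReal
      (integrableOn_Ioi_deriv_of_nonneg hcont hderiv hnonneg hlim)
      ((ae_restrict_iff' measurableSet_Ioi).2 (ae_of_all _ hnonneg)),
    integral_Ioi_of_hasDerivAt_of_nonneg hcont hderiv hnonneg hlim]
  simp [g]

lemma setLIntegral_Ioi_deriv_exp_neg_mul_rpow_mul_rpow {α p s : ℝ} (hα : 0 < α) (hp : 0 < p)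
    (hs : 0 ≤ s) :
    ∫⁻ r in Ioi 0,
        ENNReal.ofReal (α * p * r ^ (p - 1) * exp (-α * r ^ p)) * ENNReal.ofReal (r ^ s) =
      ENNReal.ofReal (Gamma (s / p + 1) * α ^ (-(s / p))) := by
  have hq : -1 < p - 1 + s := by linarith
  have hint := (integrableOn_rpow_mul_exp_neg_mul_rpow hq hp hα).const_mul (α * p)
  have hconst : α * p * (α ^ (-(p - 1 + s + 1) / p) * (1 / p)) = α ^ (-(s / p)) := by
    rw [show -(p - 1 + s + 1) / p = -(s / p) + -1 by field_simp; ring, rpow_add hα,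
      rpow_neg_one]
    field_simp
  calc ∫⁻ r in Ioi 0,
        ENNReal.ofReal (α * p * r ^ (p - 1) * exp (-α * r ^ p)) * ENNReal.ofReal (r ^ s)
      = ∫⁻ r in Ioi 0, ENNReal.ofReal (α * p * (r ^ (p - 1 + s) * exp (-α * r ^ p))) := by
        refine setLIntegral_congr_fun measurableSet_Ioi fun r (hr : 0 < r) => ?_
        rw [← ENNReal.ofReal_mul (by positivity), rpow_add hr]
        ring_nf
    _ = ENNReal.ofReal (α * p * ∫ r in Ioi 0, r ^ (p - 1 + s) * exp (-α * r ^ p)) := by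
        rw [← integral_const_mul, ofReal_integral_eq_lintegral_ofReal hint
          ((ae_restrict_iff' measurableSet_Ioi).2 (ae_of_all _ fun r (hr : 0 < r) => by
            positivity))]
    _ = _ := by
        rw [integral_rpow_mul_exp_neg_mul_rpow hp hq hα, ← mul_assoc, hconst,
          show (p - 1 + s + 1) / p = s / p + 1 by field_simp; ring, mul_comm]

section Homogeneous

variable {E : Type*} [NormedAddCommGroup E] [NormedSpace ℝ E] [FiniteDimensional ℝ E]
  [MeasurableSpace E] [BorelSpace E] (μ : Measure E) [μ.IsAddHaarMeasure]
  {G : E → ENNReal} {Q : E → ℝ} {k : ℝ}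

lemma setLIntegral_lt_eq_rpow_mul_of_homogeneous (hG : Measurable G) (hQ : Measurable Q)
    (hGhom : ∀ c > 0, ∀ x, G (c • x) = ENNReal.ofReal (c ^ k) * G x)
    (hQhom : ∀ c > 0, ∀ x, Q (c • x) = c * Q x) {r : ℝ} (hr : 0 < r) :
    ∫⁻ x in {x | Q x < r}, G x ∂μ =
      ENNReal.ofReal (r ^ (finrank ℝ E + k)) * ∫⁻ x in {x | Q x < 1}, G x ∂μ := by
  have hpre : (r • ·) ⁻¹' {x | Q x < r} = {x : E | Q x < 1} := by
    ext x
    simp [hQhom r hr, mul_lt_iff_lt_one_right hr]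
  have hdet : ENNReal.ofReal (r ^ finrank ℝ E) * ENNReal.ofReal |(r ^ finrank ℝ E)⁻¹| = 1 := by
    rw [← ENNReal.ofReal_mul (by positivity), abs_of_pos (by positivity),
      mul_inv_cancel₀ (by positivity), ENNReal.ofReal_one]
  calc ∫⁻ x in {x | Q x < r}, G x ∂μ
      = ENNReal.ofReal (r ^ finrank ℝ E) * ∫⁻ y in {x | Q x < r}, G y ∂(μ.map (r • ·)) := by
        rw [Measure.map_addHaar_smul μ hr.ne', Measure.restrict_smul, lintegral_smul_measure,
          smul_eq_mul, ← mul_assoc, hdet, one_mul]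
    _ = ENNReal.ofReal (r ^ finrank ℝ E) * ∫⁻ x in {x | Q x < 1}, G (r • x) ∂μ := by
        rw [setLIntegral_map (measurableSet_lt hQ measurable_const) hG (measurable_const_smul r),
          hpre]
    _ = _ := by
        simp_rw [hGhom r hr]
        rw [lintegral_const_mul _ hG, ← mul_assoc, ← ENNReal.ofReal_mul (by positivity),
          rpow_add hr, rpow_natCast]

theorem lintegral_mul_exp_neg_mul_rpow_of_homogeneous {α p : ℝ}
    (hG : Measurable G) (hQ : Measurable Q) (hQ0 : ∀ x, 0 ≤ Q x)
    (hGhom : ∀ c > 0, ∀ x, G (c • x) = ENNReal.ofReal (c ^ k) * G x)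
    (hQhom : ∀ c > 0, ∀ x, Q (c • x) = c * Q x) (hk : 0 ≤ k) (hα : 0 < α) (hp : 0 < p) :
    ∫⁻ x, G x * ENNReal.ofReal (exp (-α * Q x ^ p)) ∂μ =
      ENNReal.ofReal (Gamma ((finrank ℝ E + k) / p + 1) * α ^ (-((finrank ℝ E + k) / p))) *
        ∫⁻ x in {x | Q x < 1}, G x ∂μ := by
  set φ : ℝ → ENNReal := fun r => ENNReal.ofReal (α * p * r ^ (p - 1) * exp (-α * r ^ p))
  have hφ : Measurable φ := by fun_prop
  calc ∫⁻ x, G x * ENNReal.ofReal (exp (-α * Q x ^ p)) ∂μ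
      = ∫⁻ x, G x * (∫⁻ r in Ioi (Q x), φ r) ∂μ := by
        simp_rw [φ, setLIntegral_Ioi_deriv_exp_neg_mul_rpow hα hp (hQ0 _)]
    _ = ∫⁻ r, φ r * ∫⁻ x in {x | Q x < r}, G x ∂μ :=
        lintegral_mul_setLIntegral_Ioi_swap μ hG hQ hφ
    _ = ∫⁻ r in Ioi 0, φ r * ENNReal.ofReal (r ^ (finrank ℝ E + k)) *
          ∫⁻ x in {x | Q x < 1}, G x ∂μ := by
        rw [← lintegral_indicator measurableSet_Ioi]
        refine lintegral_congr fun r => ?_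
        by_cases hr : 0 < r
        · simp [hr, setLIntegral_lt_eq_rpow_mul_of_homogeneous μ hG hQ hGhom hQhom hr, mul_assoc]
        · have : {x | Q x < r} = ∅ :=
            eq_empty_of_forall_notMem fun x hx => hr ((hQ0 x).trans_lt hx)
          simp [hr, this]
    _ = _ := by
        rw [lintegral_mul_const _ (by fun_prop),
          setLIntegral_Ioi_deriv_exp_neg_mul_rpow_mul_rpow hα hp (by positivity)]

end Homogeneous

lemma finrank_real_fin_complex (n : ℕ) : finrank ℝ (Fin n → ℂ) = 2 * n := by
  simp [Module.finrank_pi_fintype, Complex.finrank_real_complex, mul_comm]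

@[fun_prop]
lemma continuous_eNorm (n : ℕ) : Continuous (eNorm (n := n)) := by
  unfold eNorm
  fun_prop

lemma eNorm_nonneg {n : ℕ} (z : Fin n → ℂ) : 0 ≤ eNorm z := sqrt_nonneg _

lemma eNorm_sq {n : ℕ} (z : Fin n → ℂ) : eNorm z ^ 2 = ∑ j, ‖z j‖ ^ 2 :=
  sq_sqrt (by positivity)

lemma eNorm_smul {n : ℕ} {c : ℝ} (hc : 0 ≤ c) (z : Fin n → ℂ) : eNorm (c • z) = c * eNorm z := by
  simp only [eNorm, Pi.smul_apply, norm_smul, mul_pow, ← Finset.mul_sum, Real.norm_eq_abs, sq_abs]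
  rw [sqrt_mul (sq_nonneg c), sqrt_sq hc]

lemma norm_prod_pow_smul_sq {n : ℕ} (ν : Fin n → ℕ) (c : ℝ) (z : Fin n → ℂ) :
    ‖∏ j, (c • z) j ^ ν j‖ ^ 2 = c ^ (2 * ∑ j, ν j) * ‖∏ j, z j ^ ν j‖ ^ 2 := by
  simp only [Pi.smul_apply, norm_prod, norm_pow, norm_smul, mul_pow, Finset.prod_mul_distrib,
    Finset.prod_pow_eq_pow_sum, Real.norm_eq_abs]
  rw [← pow_mul, mul_comm _ 2, pow_mul, pow_mul, sq_abs]

lemma integral_norm_pow_mul_exp_neg_sq (k : ℕ) :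
    ∫ w : ℂ, ‖w‖ ^ (2 * k) * exp (-‖w‖ ^ 2) = π * k.factorial := by
  have h := Complex.integral_rpow_mul_exp_neg_rpow (p := 2) (q := (2 * k : ℕ)) one_le_two
    (by linarith [(2 * k).cast_nonneg (α := ℝ)])
  rw [show (((2 * k : ℕ) : ℝ) + 2) / 2 = k + 1 by push_cast; ring, Gamma_nat_eq_factorial] at h
  simp only [rpow_natCast, rpow_two] at h
  rw [h]
  ring

lemma integral_norm_prod_pow_sq_mul_exp_neg_eNorm_sq {n : ℕ} (ν : Fin n → ℕ) :
    ∫ z : Fin n → ℂ, ‖∏ j, z j ^ ν j‖ ^ 2 * exp (-eNorm z ^ 2) =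
      π ^ n * ∏ j, ((ν j).factorial : ℝ) := by
  have hprod : ∀ z : Fin n → ℂ, ‖∏ j, z j ^ ν j‖ ^ 2 * exp (-eNorm z ^ 2) =
      ∏ j, (‖z j‖ ^ (2 * ν j) * exp (-‖z j‖ ^ 2)) := fun z => by
    rw [eNorm_sq, ← Finset.sum_neg_distrib, exp_sum, norm_prod, ← Finset.prod_pow,
      ← Finset.prod_mul_distrib]
    simp_rw [norm_pow, ← pow_mul, mul_comm 2]
  simp_rw [hprod]
  rw [integral_fintype_prod_volume_eq_prod (fun j (w : ℂ) => ‖w‖ ^ (2 * ν j) * exp (-‖w‖ ^ 2))]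
  simp [integral_norm_pow_mul_exp_neg_sq, Finset.prod_mul_distrib]

lemma integral_norm_prod_pow_sq_mul_exp_neg_mul_eNorm_rpow {n : ℕ} (ν : Fin n → ℕ) {α m : ℝ}
    (hα : 0 < α) (hm : 0 < m) :
    ∫ z : Fin n → ℂ, ‖∏ j, z j ^ ν j‖ ^ 2 * exp (-α * eNorm z ^ (2 * m)) =
      Gamma (((n : ℝ) + ∑ j, (ν j : ℝ)) / m + 1) * α ^ (-(((n : ℝ) + ∑ j, (ν j : ℝ)) / m)) *
        (∫⁻ z in {z : Fin n → ℂ | eNorm z < 1}, ENNReal.ofReal (‖∏ j, z j ^ ν j‖ ^ 2)).toReal := by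
  have hG : ∀ c > 0, ∀ z : Fin n → ℂ, ENNReal.ofReal (‖∏ j, (c • z) j ^ ν j‖ ^ 2) =
      ENNReal.ofReal (c ^ ((2 * ∑ j, ν j : ℕ) : ℝ)) * ENNReal.ofReal (‖∏ j, z j ^ ν j‖ ^ 2) :=
    fun c hc z => by
      rw [norm_prod_pow_smul_sq, rpow_natCast, ENNReal.ofReal_mul (by positivity)]
  have hexp : ((finrank ℝ (Fin n → ℂ) : ℝ) + ((2 * ∑ j, ν j : ℕ) : ℝ)) / (2 * m) =
      ((n : ℝ) + ∑ j, (ν j : ℝ)) / m := by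
    rw [finrank_real_fin_complex]
    push_cast
    field_simp
  have hΓ : 0 < Gamma (((n : ℝ) + ∑ j, (ν j : ℝ)) / m + 1) := Gamma_pos_of_pos (by positivity)
  rw [integral_eq_lintegral_of_nonneg_ae (ae_of_all _ fun z => by positivity)
    (by fun_prop : Measurable _).aestronglyMeasurable]
  simp_rw [ENNReal.ofReal_mul (sq_nonneg _)]
  rw [lintegral_mul_exp_neg_mul_rpow_of_homogeneous volume (by fun_prop) (by fun_prop)
      eNorm_nonneg hG (fun c hc z => eNorm_smul hc.le z) (by positivity) hα (by positivity),
    hexp, ENNReal.toReal_mul, ENNReal.toReal_ofReal (by positivity)]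

/-- For a multiindex `ν` and `α, m > 0`, the squared `L²` norm of the
monomial `z^ν` with respect to `e^{-α|z|^{2m}} dz` on `ℂⁿ` equals
`πⁿ ν! / (m Γ(n+|ν|)) · Γ((n+|ν|)/m) / α^{(n+|ν|)/m}`. -/
theorem stmt2 (n : ℕ) (hn : 0 < n) (ν : Fin n → ℕ) (α m : ℝ) (hα : 0 < α) (hm : 0 < m) :
    (∫ z : Fin n → ℂ,
        ‖∏ j, z j ^ ν j‖ ^ 2 * Real.exp (-α * eNorm z ^ (2 * m)))
    = (Real.pi ^ n * ∏ j, ((ν j).factorial : ℝ)) /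
        (m * Real.Gamma ((n : ℝ) + ∑ j, (ν j : ℝ))) *
      (Real.Gamma (((n : ℝ) + ∑ j, (ν j : ℝ)) / m) /
        α ^ (((n : ℝ) + ∑ j, (ν j : ℝ)) / m)) := by
  have hgauss := integral_norm_prod_pow_sq_mul_exp_neg_mul_eNorm_rpow ν one_pos one_pos
  simp only [mul_one, div_one, neg_mul, one_mul, one_rpow, rpow_two,
    integral_norm_prod_pow_sq_mul_exp_neg_eNorm_sq] at hgauss
  rw [integral_norm_prod_pow_sq_mul_exp_neg_mul_eNorm_rpow ν hα hm, hgauss]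
  set b : ℝ := (n : ℝ) + ∑ j, (ν j : ℝ)
  have hb : 0 < b := by positivity
  rw [Gamma_add_one hb.ne', Gamma_add_one (div_pos hb hm).ne', rpow_neg hα.le]
  field_simp
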